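/- A non-revisiting dual path in a pure (d−1)-dimensional simplicial complex on n vertices has length at most n − d. -/

import Mathlib

/-!
Each step of a dual path between `d`-sets meeting in `d - 1` elements brings in exactly one new
vertex. Non-revisiting forces a vertex that enters at step `i` to be absent from every earlier
facet, so the entering vertices are pairwise distinct and disjoint from the first facet. Hence
`d + N ≤ n`.
-/

open Finset

theorem card_sdiff_eq_one_of_card_inter {α : Type*} [DecidableEq α] {s t : Finset α} {d : ℕ}
    (hd : 1 ≤ d) (ht : #t = d) (hst : #(s ∩ t) = d - 1) : #(t \ s) = 1 := by
  have := card_sdiff_add_card_inter t s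
  rw [inter_comm, hst, ht] at this
  omega

def IsNonrevisiting {ι α : Type*} [Preorder ι] [DecidableEq α] (X : ι → Finset α) : Prop :=
  ∀ ⦃i j k⦄, i ≤ j → j ≤ k → X i ∩ X k ⊆ X j

namespace IsNonrevisiting

variable {α : Type*} [DecidableEq α]

theorem notMem_of_le {ι : Type*} [Preorder ι] {X : ι → Finset α} (h : IsNonrevisiting X)
    {i j k : ι} {v : α} (hij : i ≤ j) (hjk : j ≤ k) (hk : v ∈ X k) (hj : v ∉ X j) :
    v ∉ X i :=
  fun hi => hj (h hij hjk (mem_inter.2 ⟨hi, hk⟩))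

variable {N : ℕ} {X : Fin (N + 1) → Finset α}

theorem notMem_zero_of_mem_sdiff (h : IsNonrevisiting X) {i : Fin N} {v : α}
    (hv : v ∈ X i.succ \ X i.castSucc) : v ∉ X 0 :=
  h.notMem_of_le (Fin.zero_le _) (Fin.castSucc_le_succ i) (mem_sdiff.1 hv).1 (mem_sdiff.1 hv).2

theorem injective_of_mem_sdiff (h : IsNonrevisiting X) {f : Fin N → α}
    (hf : ∀ i, f i ∈ X i.succ \ X i.castSucc) : Function.Injective f := by
  have hne : ∀ i j, i < j → f i ≠ f j := fun i j hij heq =>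
    h.notMem_of_le (Fin.succ_le_castSucc_iff.2 hij) (Fin.castSucc_le_succ j)
      (mem_sdiff.1 (hf j)).1 (mem_sdiff.1 (hf j)).2 (heq ▸ (mem_sdiff.1 (hf i)).1)
  intro i j heq
  rcases lt_trichotomy i j with hlt | rfl | hgt
  · exact absurd heq (hne i j hlt)
  · rfl
  · exact absurd heq.symm (hne j i hgt)

theorem card_add_le_card [Fintype α] (h : IsNonrevisiting X)
    (hnew : ∀ i : Fin N, (X i.succ \ X i.castSucc).Nonempty) :
    #(X 0) + N ≤ Fintype.card α := by
  choose f hf using hnew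
  have hdisj : Disjoint (X 0) (univ.image f) := by
    rw [disjoint_right]
    intro v hv
    obtain ⟨i, -, rfl⟩ := mem_image.1 hv
    exact h.notMem_zero_of_mem_sdiff (hf i)
  calc #(X 0) + N = #(X 0 ∪ univ.image f) := by
        rw [card_union_of_disjoint hdisj, card_image_of_injective _ (h.injective_of_mem_sdiff hf),
          card_univ, Fintype.card_fin]
    _ ≤ Fintype.card α := card_le_univ _

end IsNonrevisiting

/-- A non-revisiting dual path in a pure `(d−1)`-dimensional simplicial complex on `n`
vertices has length at most `n − d`: if `X 0, …, X N` are facets (`d`-subsets of `[n]`)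
such that consecutive facets share exactly `d−1` vertices, and `X i ∩ X k ⊆ X j`
whenever `i ≤ j ≤ k` (non-revisiting), then `N ≤ n − d`. -/
theorem nonrevisiting_path_length_le (n d N : ℕ) (hd : 1 ≤ d)
    (X : Fin (N + 1) → Finset (Fin n))
    (hcard : ∀ i, (X i).card = d)
    (hstep : ∀ i : Fin N, (X i.castSucc ∩ X i.succ).card = d - 1)
    (hnonrev : ∀ i j k : Fin (N + 1), i ≤ j → j ≤ k → X i ∩ X k ⊆ X j) :
    N ≤ n - d := by
  have hpath : IsNonrevisiting X := fun _ _ _ => hnonrev _ _ _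
  have hnew : ∀ i : Fin N, (X i.succ \ X i.castSucc).Nonempty := fun i =>
    card_pos.1 (by rw [card_sdiff_eq_one_of_card_inter hd (hcard _) (hstep i)]; exact one_pos)
  have hbound := hpath.card_add_le_card hnew
  rw [hcard, Fintype.card_fin] at hbound
  omega
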